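/- For all x₁, x₂, v₁, v₂ ∈ ℝ² with |v₁| ≤ ρ/2, |v₂| ≤ ρ/2 and |x₁ − x₂| ≥ ρ, it holds that ⟨x₁ − x₂, sat_ρ(x₂ − x₁) + g(x₁) + v₁ − g(x₂) − v₂⟩ ≤ 0, where ⟨·,·⟩ denotes the standard inner product on ℝ². -/

import Mathlib

/-- The repulsive vector field from the boundary of the disk of radius `R`
(Section 7 of the paper). -/
noncomputable def gfield (ρ R : ℝ) (x : EuclideanSpace ℝ (Fin 2)) :
    EuclideanSpace ℝ (Fin 2) :=
  if ‖x‖ < R - ρ / 2 then 0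
  else if ‖x‖ < R then ((R - ρ / 2) - ‖x‖) • (‖x‖⁻¹ • x)
  else -(ρ / 2) • (‖x‖⁻¹ • x)

/-- The saturation function sat_ρ (Section 7 of the paper). -/
noncomputable def satρ (ρ : ℝ) (x : EuclideanSpace ℝ (Fin 2)) :
    EuclideanSpace ℝ (Fin 2) :=
  if ‖x‖ ≤ ρ then x else ρ • (‖x‖⁻¹ • x)

noncomputable def hfun (ρ R r : ℝ) : ℝ :=
  if r < R - ρ / 2 then 0 else if r < R then (R - ρ / 2) - r else -(ρ / 2)

lemma gfield_eq (ρ R : ℝ) (x : EuclideanSpace ℝ (Fin 2)) :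
    gfield ρ R x = (hfun ρ R ‖x‖ * ‖x‖⁻¹) • x := by
  unfold gfield hfun
  split_ifs <;> simp [smul_smul]

lemma hfun_nonpos (ρ R r : ℝ) (hρ : 0 < ρ) : hfun ρ R r ≤ 0 := by
  unfold hfun; split_ifs <;> linarith

lemma hfun_anti (ρ R r₁ r₂ : ℝ) (hρ : 0 < ρ) (h : r₁ ≤ r₂) :
    hfun ρ R r₂ ≤ hfun ρ R r₁ := by
  unfold hfun; split_ifs <;> linarith

lemma key (r₁ r₂ h₁ h₂ p : ℝ) (hr₁ : 0 < r₁) (hr₂ : 0 < r₂)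
    (hh₁ : h₁ ≤ 0) (hh₂ : h₂ ≤ 0) (hp : p ≤ r₁ * r₂)
    (hmono : (h₁ - h₂) * (r₁ - r₂) ≤ 0) :
    (h₁ * r₁⁻¹) * (r₁ ^ 2 - p) - (h₂ * r₂⁻¹) * (p - r₂ ^ 2) ≤ 0 := by
  rw [show (h₁ * r₁⁻¹) * (r₁ ^ 2 - p) - (h₂ * r₂⁻¹) * (p - r₂ ^ 2)
      = (h₁ * r₂ * (r₁ ^ 2 - p) - h₂ * r₁ * (p - r₂ ^ 2)) / (r₁ * r₂) by
    field_simp]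
  apply div_nonpos_of_nonpos_of_nonneg _ (mul_pos hr₁ hr₂).le
  nlinarith [mul_nonneg (mul_nonneg (neg_nonneg.2 hh₁) hr₂.le) (sub_nonneg.2 hp),
    mul_nonneg (mul_nonneg (neg_nonneg.2 hh₂) hr₁.le) (sub_nonneg.2 hp),
    mul_nonneg (mul_pos hr₁ hr₂).le (neg_nonneg.2 hmono)]

lemma gmono (ρ R : ℝ) (hρ : 0 < ρ) (x₁ x₂ : EuclideanSpace ℝ (Fin 2)) :
    (inner ℝ (x₁ - x₂) (gfield ρ R x₁ - gfield ρ R x₂) : ℝ) ≤ 0 := by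
  rw [gfield_eq, gfield_eq]
  set h₁ := hfun ρ R ‖x₁‖ with hh₁def
  set h₂ := hfun ρ R ‖x₂‖ with hh₂def
  have hh₁ : h₁ ≤ 0 := hfun_nonpos ρ R _ hρ
  have hh₂ : h₂ ≤ 0 := hfun_nonpos ρ R _ hρ
  rcases eq_or_ne x₁ 0 with rfl | hx₁
  · rw [smul_zero, zero_sub, zero_sub, inner_neg_neg, real_inner_smul_right,
      real_inner_self_eq_norm_sq]
    apply mul_nonpos_of_nonpos_of_nonneg _ (sq_nonneg _)
    exact mul_nonpos_of_nonpos_of_nonneg hh₂ (inv_nonneg.2 (norm_nonneg _))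
  rcases eq_or_ne x₂ 0 with rfl | hx₂
  · rw [smul_zero, sub_zero, sub_zero, real_inner_smul_right,
      real_inner_self_eq_norm_sq]
    apply mul_nonpos_of_nonpos_of_nonneg _ (sq_nonneg _)
    exact mul_nonpos_of_nonpos_of_nonneg hh₁ (inv_nonneg.2 (norm_nonneg _))
  · have hr₁ : (0:ℝ) < ‖x₁‖ := norm_pos_iff.2 hx₁
    have hr₂ : (0:ℝ) < ‖x₂‖ := norm_pos_iff.2 hx₂
    have hp : (inner ℝ x₁ x₂ : ℝ) ≤ ‖x₁‖ * ‖x₂‖ := real_inner_le_norm x₁ x₂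
    have hmono : (h₁ - h₂) * (‖x₁‖ - ‖x₂‖) ≤ 0 := by
      rcases le_total ‖x₁‖ ‖x₂‖ with h | h
      · have := hfun_anti ρ R ‖x₁‖ ‖x₂‖ hρ h
        nlinarith
      · have := hfun_anti ρ R ‖x₂‖ ‖x₁‖ hρ h
        nlinarith
    have := key ‖x₁‖ ‖x₂‖ h₁ h₂ (inner ℝ x₁ x₂ : ℝ) hr₁ hr₂ hh₁ hh₂ hp hmono
    calc (inner ℝ (x₁ - x₂) ((h₁ * ‖x₁‖⁻¹) • x₁ - (h₂ * ‖x₂‖⁻¹) • x₂) : ℝ)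
        = (h₁ * ‖x₁‖⁻¹) * (‖x₁‖ ^ 2 - (inner ℝ x₁ x₂ : ℝ))
          - (h₂ * ‖x₂‖⁻¹) * ((inner ℝ x₁ x₂ : ℝ) - ‖x₂‖ ^ 2) := by
          rw [inner_sub_right, real_inner_smul_right, real_inner_smul_right,
            inner_sub_left, inner_sub_left, real_inner_self_eq_norm_sq,
            real_inner_self_eq_norm_sq, real_inner_comm x₂ x₁]
      _ ≤ 0 := this

lemma sat_eq (ρ : ℝ) (hρ : 0 < ρ) (y : EuclideanSpace ℝ (Fin 2)) (hy : ρ ≤ ‖y‖) :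
    (inner ℝ y (satρ ρ (-y)) : ℝ) = -(ρ * ‖y‖) := by
  unfold satρ
  rw [norm_neg]
  split_ifs with h
  · have hyy : ‖y‖ = ρ := le_antisymm h hy
    rw [inner_neg_right, real_inner_self_eq_norm_sq, hyy]; ring
  · have hy0 : (0:ℝ) < ‖y‖ := lt_of_lt_of_le hρ hy
    rw [real_inner_smul_right, real_inner_smul_right, inner_neg_right,
      real_inner_self_eq_norm_sq]
    field_simp

theorem stmt_16 (ρ R : ℝ) (hρ : 0 < ρ) (hρR : ρ ≤ R) :
    ∀ x₁ x₂ v₁ v₂ : EuclideanSpace ℝ (Fin 2),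
      ‖v₁‖ ≤ ρ / 2 → ‖v₂‖ ≤ ρ / 2 → ρ ≤ ‖x₁ - x₂‖ →
      (inner ℝ (x₁ - x₂)
        (satρ ρ (x₂ - x₁) + gfield ρ R x₁ + v₁ - gfield ρ R x₂ - v₂) : ℝ) ≤ 0 := by
  intro x₁ x₂ v₁ v₂ hv₁ hv₂ hx
  have hsplit : satρ ρ (x₂ - x₁) + gfield ρ R x₁ + v₁ - gfield ρ R x₂ - v₂
      = satρ ρ (-(x₁ - x₂)) + (gfield ρ R x₁ - gfield ρ R x₂) + (v₁ - v₂) := by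
    rw [neg_sub]; abel
  rw [hsplit, inner_add_right, inner_add_right]
  have h1 := sat_eq ρ hρ (x₁ - x₂) hx
  have h2 := gmono ρ R hρ x₁ x₂
  have h3 : (inner ℝ (x₁ - x₂) (v₁ - v₂) : ℝ) ≤ ‖x₁ - x₂‖ * ρ := by
    calc (inner ℝ (x₁ - x₂) (v₁ - v₂) : ℝ) ≤ ‖x₁ - x₂‖ * ‖v₁ - v₂‖ :=
          real_inner_le_norm _ _
      _ ≤ ‖x₁ - x₂‖ * ρ := by
          apply mul_le_mul_of_nonneg_left _ (norm_nonneg _)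
          calc ‖v₁ - v₂‖ ≤ ‖v₁‖ + ‖v₂‖ := norm_sub_le _ _
            _ ≤ ρ := by linarith
  nlinarith [norm_nonneg (x₁ - x₂)]
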